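/- Let P and Q be probability measures on a measurable space with P absolutely continuous with respect to Q, and let E be a measurable set. Assume the log-likelihood ratio log(dP/dQ) is integrable on E with respect to P. Then ∫_E log(dP/dQ) dP ≥ P(E)·log(P(E)/Q(E)), where the right-hand side is interpreted as 0 when P(E) = 0. -/

import Mathlib

/-!
The Radon–Nikodym derivative of `P|_E` with respect to `Q|_E` agrees with `dP/dQ` on `E`, so
restricting both measures to `E` reduces the claim to Gibbs' inequality for finite measures,
`μ(X) log (μ(X) / ν(X)) ≤ ∫ log (dμ/dν) dμ`, which is Jensen's inequality for the convex function
`t ↦ t log t + 1 - t` applied to `dμ/dν` under `ν`.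
-/

open MeasureTheory InformationTheory Set

namespace MeasureTheory

lemma Measure.rnDeriv_restrict_restrict {α : Type*} [MeasurableSpace α] (μ ν : Measure α)
    [μ.HaveLebesgueDecomposition ν] [SigmaFinite ν] {s : Set α} (hs : MeasurableSet s) :
    (μ.restrict s).rnDeriv (ν.restrict s) =ᵐ[ν.restrict s] μ.rnDeriv ν := by
  refine (Measure.eq_rnDeriv (s := (μ.singularPart ν).restrict s) (μ.measurable_rnDeriv ν)
    ((μ.mutuallySingular_singularPart ν).restrict s |>.symm.restrict s |>.symm) ?_).symm
  rw [← restrict_withDensity hs, ← Measure.restrict_add, ← μ.haveLebesgueDecomposition_add ν]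

variable {α : Type*} [MeasurableSpace α] {μ ν : Measure α}

lemma llr_restrict_restrict [μ.HaveLebesgueDecomposition ν] [SigmaFinite ν] (hμν : μ ≪ ν)
    {s : Set α} (hs : MeasurableSet s) :
    llr (μ.restrict s) (ν.restrict s) =ᵐ[μ.restrict s] llr μ ν := by
  filter_upwards [(hμν.restrict s).ae_le (Measure.rnDeriv_restrict_restrict μ ν hs)] with x hx
  simp only [llr_def, hx]

lemma measureReal_univ_mul_log_le_integral_llr [IsFiniteMeasure μ] [IsFiniteMeasure ν]
    (hμν : μ ≪ ν) (h_int : Integrable (llr μ ν) μ) :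
    μ.real univ * Real.log (μ.real univ / ν.real univ) ≤ ∫ x, llr μ ν x ∂μ := by
  have h_gibbs := mul_log_le_toReal_klDiv hμν h_int
  rw [toReal_klDiv hμν h_int] at h_gibbs
  linarith

lemma measureReal_mul_log_le_setIntegral_llr [IsFiniteMeasure μ] [IsFiniteMeasure ν]
    (hμν : μ ≪ ν) {s : Set α} (hs : MeasurableSet s) (h_int : IntegrableOn (llr μ ν) s μ) :
    μ.real s * Real.log (μ.real s / ν.real s) ≤ ∫ x in s, llr μ ν x ∂μ := by
  have h_llr := llr_restrict_restrict hμν hs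
  have h := measureReal_univ_mul_log_le_integral_llr (hμν.restrict s)
    (h_int.congr h_llr.symm)
  rwa [integral_congr_ae h_llr, measureReal_restrict_apply_univ,
    measureReal_restrict_apply_univ] at h

end MeasureTheory

theorem loglikelihood_ratio_event_lower_bound
    {X : Type*} [MeasurableSpace X] (P Q : Measure X)
    [IsProbabilityMeasure P] [IsProbabilityMeasure Q]
    (hac : P ≪ Q) (E : Set X) (hE : MeasurableSet E)
    (hInt : IntegrableOn (llr P Q) E P) :
    (P E).toReal * Real.log ((P E).toReal / (Q E).toReal) ≤ ∫ x in E, llr P Q x ∂P :=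
  measureReal_mul_log_le_setIntegral_llr hac hE hInt
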